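/- Let (Ω, F, μ) be a probability space, let x : Ω → ℝⁿ and y : Ω → {1, …, C} be measurable, and let P_c := μ[1_{y=c} | σ(x)] denote the conditional probability of the cluster-c label given σ(x). Fix integers C ≥ 1 and p ≥ 1, a step size β > 0, and a balancing parameter ρ > 0. Let Φ_1, …, Φ_C : ℝⁿ → [0,1] be measurable, let w^1, …, w^C ∈ ℝ^p be prototype vectors, let ξ : Ω → ℝ^p be measurable with ∫ ‖ξ‖² dμ < ∞, and let G : Ω → ℝ^C be measurable such that for μ-almost every ω, G(ω) is a probability vector (entries in [0,1] summing to 1); set κ(ω) := β‖G(ω)‖² / (2 + β‖G(ω)‖²). Suppose the encoding error e : Ω → ℝ^p satisfies, for μ-almost every ω and every coordinate j, e_j(ω) = (1 + κ(ω)) Σ_{c=1}^C (P_c(ω) − Φ_c(x(ω))) (w^c)_j + κ(ω) ξ_j(ω). Then ∫ ‖e‖² dμ ≤ (1+ρ) (1 + β/(2+β))² (Σ_{c=1}^C ‖w^c‖²) Σ_{c=1}^C ∫ |Φ_c(x(ω)) − P_c(ω)|² dμ(ω) + (1+ρ⁻¹) (β/(2+β))² ∫ ‖ξ‖² dμ.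 -/

import Mathlib

/-!
Write `e = (1 + κ) • v + κ • ξ` with `v = Σ_c (P_c − Φ_c ∘ x) • w^c`. Young's inequality
`‖a + b‖² ≤ (1 + ρ)‖a‖² + (1 + ρ⁻¹)‖b‖²` separates the two terms, Cauchy–Schwarz gives
`‖v‖² ≤ (Σ_c ‖w^c‖²) Σ_c |Φ_c ∘ x − P_c|²`, and `‖G‖² ≤ 1` for a probability vector `G`
gives `0 ≤ κ ≤ β/(2+β)`. Integrating needs only the dominating function to be integrable:
`P_c`, a conditional expectation of an indicator, is a.e. bounded by `1`.
-/

open MeasureTheory Finset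

lemma add_sq_le_one_add_mul_sq {α : Type*} [Field α] [LinearOrder α] [IsStrictOrderedRing α]
    (a b : α) {ε : α} (hε : 0 < ε) :
    (a + b) ^ 2 ≤ (1 + ε) * a ^ 2 + (1 + ε⁻¹) * b ^ 2 := by
  linarith [add_sq a b, two_mul_le_add_mul_sq (a := a) (b := b) hε]

lemma norm_add_sq_le_one_add_mul_norm_sq {E : Type*} [SeminormedAddCommGroup E] (u v : E)
    {ε : ℝ} (hε : 0 < ε) :
    ‖u + v‖ ^ 2 ≤ (1 + ε) * ‖u‖ ^ 2 + (1 + ε⁻¹) * ‖v‖ ^ 2 :=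
  (pow_le_pow_left₀ (norm_nonneg _) (norm_add_le u v) 2).trans (add_sq_le_one_add_mul_sq _ _ hε)

lemma norm_sum_smul_sq_le {ι E : Type*} [SeminormedAddCommGroup E] [NormedSpace ℝ E]
    (s : Finset ι) (a : ι → ℝ) (u : ι → E) :
    ‖∑ i ∈ s, a i • u i‖ ^ 2 ≤ (∑ i ∈ s, ‖u i‖ ^ 2) * ∑ i ∈ s, |a i| ^ 2 := by
  have hle : ‖∑ i ∈ s, a i • u i‖ ≤ ∑ i ∈ s, ‖u i‖ * |a i| := by
    refine (norm_sum_le _ _).trans_eq (sum_congr rfl fun i _ => ?_)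
    rw [norm_smul, Real.norm_eq_abs, mul_comm]
  calc ‖∑ i ∈ s, a i • u i‖ ^ 2 ≤ (∑ i ∈ s, ‖u i‖ * |a i|) ^ 2 :=
        pow_le_pow_left₀ (norm_nonneg _) hle 2
    _ ≤ (∑ i ∈ s, ‖u i‖ ^ 2) * ∑ i ∈ s, |a i| ^ 2 := sum_mul_sq_le_sq_mul_sq _ _ _

lemma norm_one_add_smul_add_smul_sq_le {E : Type*} [SeminormedAddCommGroup E] [NormedSpace ℝ E]
    (u v : E) {κ k ε : ℝ} (hκ : κ ∈ Set.Icc 0 k) (hε : 0 < ε) :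
    ‖(1 + κ) • u + κ • v‖ ^ 2
      ≤ (1 + ε) * (1 + k) ^ 2 * ‖u‖ ^ 2 + (1 + ε⁻¹) * k ^ 2 * ‖v‖ ^ 2 := by
  obtain ⟨hκ0, hκk⟩ := hκ
  calc ‖(1 + κ) • u + κ • v‖ ^ 2
      ≤ (1 + ε) * ‖(1 + κ) • u‖ ^ 2 + (1 + ε⁻¹) * ‖κ • v‖ ^ 2 :=
        norm_add_sq_le_one_add_mul_norm_sq _ _ hε
    _ = (1 + ε) * (1 + κ) ^ 2 * ‖u‖ ^ 2 + (1 + ε⁻¹) * κ ^ 2 * ‖v‖ ^ 2 := by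
        rw [norm_smul, norm_smul, Real.norm_of_nonneg (by linarith), Real.norm_of_nonneg hκ0]
        ring
    _ ≤ (1 + ε) * (1 + k) ^ 2 * ‖u‖ ^ 2 + (1 + ε⁻¹) * k ^ 2 * ‖v‖ ^ 2 := by
        gcongr

lemma norm_one_add_smul_sum_smul_add_smul_sq_le {ι E : Type*} [SeminormedAddCommGroup E]
    [NormedSpace ℝ E] (s : Finset ι) (a : ι → ℝ) (u : ι → E) (v : E) {κ k ε : ℝ}
    (hκ : κ ∈ Set.Icc 0 k) (hε : 0 < ε) :
    ‖(1 + κ) • ∑ i ∈ s, a i • u i + κ • v‖ ^ 2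
      ≤ (1 + ε) * (1 + k) ^ 2 * (∑ i ∈ s, ‖u i‖ ^ 2) * ∑ i ∈ s, |a i| ^ 2
        + (1 + ε⁻¹) * k ^ 2 * ‖v‖ ^ 2 := by
  refine (norm_one_add_smul_add_smul_sq_le _ _ hκ hε).trans ?_
  rw [mul_assoc _ (∑ i ∈ s, ‖u i‖ ^ 2)]
  gcongr
  exact norm_sum_smul_sq_le s a u

lemma EuclideanSpace.norm_sq_le_one_of_sum_eq_one {ι : Type*} [Fintype ι]
    {g : EuclideanSpace ℝ ι} (hg : ∀ i, g i ∈ Set.Icc (0 : ℝ) 1) (hsum : ∑ i, g i = 1) :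
    ‖g‖ ^ 2 ≤ 1 := by
  rw [EuclideanSpace.norm_sq_eq, ← hsum]
  refine sum_le_sum fun i _ => ?_
  obtain ⟨h0, h1⟩ := hg i
  rw [Real.norm_eq_abs, sq_abs]
  nlinarith

lemma mul_div_two_add_mul_mem_Icc {β t : ℝ} (hβ : 0 ≤ β) (ht : t ∈ Set.Icc (0 : ℝ) 1) :
    β * t / (2 + β * t) ∈ Set.Icc 0 (β / (2 + β)) := by
  obtain ⟨ht0, ht1⟩ := ht
  refine ⟨by positivity, ?_⟩
  rw [div_le_div_iff₀ (by positivity) (by positivity)]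
  nlinarith [mul_nonneg hβ ht0, mul_le_mul_of_nonneg_left ht1 hβ]

lemma integrable_sq_abs_sub_condExp {Ω : Type*} {m m₀ : MeasurableSpace Ω} {μ : Measure[m₀] Ω}
    [IsFiniteMeasure μ] {φ f : Ω → ℝ} {a b : ℝ} (hφ : AEStronglyMeasurable φ μ)
    (hφa : ∀ᵐ ω ∂μ, |φ ω| ≤ a) (hfb : ∀ᵐ ω ∂μ, |f ω| ≤ b) :
    Integrable (fun ω => |φ ω - μ[f | m] ω| ^ 2) μ := by
  refine .of_bound ((hφ.sub integrable_condExp.aestronglyMeasurable).norm.pow 2) ((a + b) ^ 2) ?_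
  filter_upwards [hφa, ae_bdd_abs_condExp_of_ae_bdd_abs (m := m) hfb] with ω hφω hfω
  rw [Real.norm_of_nonneg (by positivity)]
  exact pow_le_pow_left₀ (abs_nonneg _) ((abs_sub _ _).trans (add_le_add hφω hfω)) 2

theorem encoding_error_integral_bound_general
    {Ω : Type*} [MeasurableSpace Ω] (μ : Measure Ω) [IsProbabilityMeasure μ]
    (n C p : ℕ)
    (x : Ω → EuclideanSpace ℝ (Fin n)) (hx : Measurable x)
    (y : Ω → Fin C)
    (P : Fin C → Ω → ℝ)
    (hP : ∀ c, P c = μ[(fun ω => if y ω = c then (1 : ℝ) else 0) |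
      MeasurableSpace.comap x inferInstance])
    (β : ℝ) (hβ : 0 < β) (ρ : ℝ) (hρ : 0 < ρ)
    (Φ : Fin C → EuclideanSpace ℝ (Fin n) → ℝ)
    (hΦmeas : ∀ c, Measurable (Φ c))
    (hΦ01 : ∀ c t, Φ c t ∈ Set.Icc (0 : ℝ) 1)
    (w : Fin C → EuclideanSpace ℝ (Fin p))
    (ξ : Ω → EuclideanSpace ℝ (Fin p))
    (hξ2 : Integrable (fun ω => ‖ξ ω‖ ^ 2) μ)
    (G : Ω → EuclideanSpace ℝ (Fin C))
    (hGprob : ∀ᵐ ω ∂μ, (∀ i, G ω i ∈ Set.Icc (0 : ℝ) 1) ∧ ∑ i, G ω i = 1)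
    (κ : Ω → ℝ) (hκ : κ = fun ω => β * ‖G ω‖ ^ 2 / (2 + β * ‖G ω‖ ^ 2))
    (e : Ω → EuclideanSpace ℝ (Fin p))
    (he : ∀ᵐ ω ∂μ, ∀ j, e ω j
      = (1 + κ ω) * (∑ c, (P c ω - Φ c (x ω)) * w c j) + κ ω * ξ ω j) :
    ∫ ω, ‖e ω‖ ^ 2 ∂μ
      ≤ (1 + ρ) * (1 + β / (2 + β)) ^ 2 * (∑ c, ‖w c‖ ^ 2) *
          (∑ c, ∫ ω, |Φ c (x ω) - P c ω| ^ 2 ∂μ)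
        + (1 + ρ⁻¹) * (β / (2 + β)) ^ 2 * ∫ ω, ‖ξ ω‖ ^ 2 ∂μ := by
  set k := β / (2 + β)
  have hκk : ∀ᵐ ω ∂μ, κ ω ∈ Set.Icc 0 k := by
    filter_upwards [hGprob] with ω ⟨hG01, hGsum⟩
    rw [hκ]
    exact mul_div_two_add_mul_mem_Icc hβ.le
      ⟨sq_nonneg _, EuclideanSpace.norm_sq_le_one_of_sum_eq_one hG01 hGsum⟩
  have hmismatch (c : Fin C) : Integrable (fun ω => |Φ c (x ω) - P c ω| ^ 2) μ := by
    rw [hP c]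
    refine integrable_sq_abs_sub_condExp (a := 1) (b := 1)
      ((hΦmeas c).comp hx).aestronglyMeasurable (ae_of_all _ fun ω => ?_) (ae_of_all _ fun ω => ?_)
    · exact abs_le.2 ⟨by linarith [(hΦ01 c (x ω)).1], (hΦ01 c (x ω)).2⟩
    · split_ifs <;> simp
  have hpointwise : ∀ᵐ ω ∂μ, ‖e ω‖ ^ 2
      ≤ (1 + ρ) * (1 + k) ^ 2 * (∑ c, ‖w c‖ ^ 2) * ∑ c, |Φ c (x ω) - P c ω| ^ 2
        + (1 + ρ⁻¹) * k ^ 2 * ‖ξ ω‖ ^ 2 := by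
    filter_upwards [he, hκk] with ω heω hκω
    have hdecomp : e ω = (1 + κ ω) • ∑ c, (P c ω - Φ c (x ω)) • w c + κ ω • ξ ω := by
      ext j
      simp [heω j]
    rw [hdecomp]
    simpa only [abs_sub_comm (P _ ω)] using
      norm_one_add_smul_sum_smul_add_smul_sq_le univ (fun c => P c ω - Φ c (x ω)) w (ξ ω) hκω hρ
  have hmismatch_sum : Integrable (fun ω => ∑ c, |Φ c (x ω) - P c ω| ^ 2) μ :=
    integrable_finsetSum _ fun c _ => hmismatch c
  calc ∫ ω, ‖e ω‖ ^ 2 ∂μ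
      ≤ ∫ ω, (1 + ρ) * (1 + k) ^ 2 * (∑ c, ‖w c‖ ^ 2) * ∑ c, |Φ c (x ω) - P c ω| ^ 2
          + (1 + ρ⁻¹) * k ^ 2 * ‖ξ ω‖ ^ 2 ∂μ :=
        integral_mono_of_nonneg (ae_of_all _ fun _ => sq_nonneg _)
          ((hmismatch_sum.const_mul _).add (hξ2.const_mul _)) hpointwise
    _ = _ := by
        rw [integral_add (hmismatch_sum.const_mul _) (hξ2.const_mul _), integral_const_mul,
          integral_const_mul, integral_finsetSum _ fun c _ => hmismatch c]

/-- Encoding-error proposition: if the encoding error `e` satisfies, almost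
everywhere and in every coordinate `j`,
`e_j = (1+κ) Σ_c (P_c − Φ_c∘x)(w^c)_j + κ ξ_j` with
`κ = β‖G‖²/(2 + β‖G‖²)` and `G` almost surely a probability vector, then
`∫ ‖e‖² ≤ (1+ρ)(1 + β/(2+β))²(Σ_c ‖w^c‖²) Σ_c ∫ |Φ_c∘x − P_c|²
  + (1+ρ⁻¹)(β/(2+β))² ∫ ‖ξ‖²`. -/
theorem encoding_error_integral_bound
    {Ω : Type*} [MeasurableSpace Ω] (μ : Measure Ω) [IsProbabilityMeasure μ]
    (n C p : ℕ) (hC : 1 ≤ C) (hp : 1 ≤ p)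
    (x : Ω → EuclideanSpace ℝ (Fin n)) (hx : Measurable x)
    (y : Ω → Fin C) (hy : Measurable y)
    (P : Fin C → Ω → ℝ)
    (hP : ∀ c, P c = μ[(fun ω => if y ω = c then (1 : ℝ) else 0) |
      MeasurableSpace.comap x inferInstance])
    (β : ℝ) (hβ : 0 < β) (ρ : ℝ) (hρ : 0 < ρ)
    (Φ : Fin C → EuclideanSpace ℝ (Fin n) → ℝ)
    (hΦmeas : ∀ c, Measurable (Φ c))
    (hΦ01 : ∀ c t, Φ c t ∈ Set.Icc (0 : ℝ) 1)
    (w : Fin C → EuclideanSpace ℝ (Fin p))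
    (ξ : Ω → EuclideanSpace ℝ (Fin p)) (hξ : Measurable ξ)
    (hξ2 : Integrable (fun ω => ‖ξ ω‖ ^ 2) μ)
    (G : Ω → EuclideanSpace ℝ (Fin C)) (hG : Measurable G)
    (hGprob : ∀ᵐ ω ∂μ, (∀ i, G ω i ∈ Set.Icc (0 : ℝ) 1) ∧ ∑ i, G ω i = 1)
    (κ : Ω → ℝ) (hκ : κ = fun ω => β * ‖G ω‖ ^ 2 / (2 + β * ‖G ω‖ ^ 2))
    (e : Ω → EuclideanSpace ℝ (Fin p))
    (he : ∀ᵐ ω ∂μ, ∀ j, e ω j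
      = (1 + κ ω) * (∑ c, (P c ω - Φ c (x ω)) * w c j) + κ ω * ξ ω j) :
    ∫ ω, ‖e ω‖ ^ 2 ∂μ
      ≤ (1 + ρ) * (1 + β / (2 + β)) ^ 2 * (∑ c, ‖w c‖ ^ 2) *
          (∑ c, ∫ ω, |Φ c (x ω) - P c ω| ^ 2 ∂μ)
        + (1 + ρ⁻¹) * (β / (2 + β)) ^ 2 * ∫ ω, ‖ξ ω‖ ^ 2 ∂μ :=
  encoding_error_integral_bound_general μ n C p x hx y P hP β hβ ρ hρ Φ hΦmeas hΦ01 w ξ hξ2 G hGprob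
    κ hκ e he
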